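/- In the group G = ⟨α_0, α_1, α_2, … ∣ α_i α_j = α_{j+1} α_i for i < j⟩, every positive word is equal in G to a unique positive word α_{i_1} α_{i_2} ⋯ α_{i_s} with non-increasing indices i_1 ≥ i_2 ≥ ⋯ ≥ i_s. -/

import Mathlib

/-!
Existence is insertion sort: `α_i α_j = α_{j+1} α_i` for `i < j` moves a letter rightwards past
the larger letters of a non-increasing word, raising each of them by one.

Uniqueness comes from the action of `F` on Cantor space `2^ℕ`: `α₀` acts by
`1s ↦ 11s, 01s ↦ 10s, 00s ↦ 0s` and `α_{i+1}` acts as `α_i` on the cone `1·2^ℕ`. On the points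
`1ⁿ01^∞` the letter `α_i` acts on `n` as `n ↦ n + [i ≤ n]`, so the last (smallest) letter of a
non-increasing word is the least such point it moves, and is determined by the group element.
Cancelling it on the right and inducting gives uniqueness.
-/

/-- The relators `α_i α_j (α_{j+1} α_i)⁻¹` for `i < j`. -/
def thompsonRels : Set (FreeGroup ℕ) :=
  { r | ∃ i j : ℕ, i < j ∧
      r = FreeGroup.of i * FreeGroup.of j *
            (FreeGroup.of (j + 1) * FreeGroup.of i)⁻¹ }

/-- Thompson's group `F` presented as
`⟨α₀, α₁, … ∣ αᵢ αⱼ = α_{j+1} αᵢ for i < j⟩`. -/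
abbrev ThompsonF : Type := PresentedGroup thompsonRels

/-- the generator `αₙ` -/
def alphaGen (n : ℕ) : ThompsonF := PresentedGroup.of n

/-- the element of `ThompsonF` given by a positive word (a list of indices) -/
def wordProd (l : List ℕ) : ThompsonF := (l.map alphaGen).prod

namespace Stream'

def headTailEquiv (α : Type*) : Stream' α ≃ α × Stream' α where
  toFun s := (s.head, s.tail)
  invFun p := cons p.1 p.2
  left_inv := Stream'.eta
  right_inv _ := rfl

end Stream'

namespace ThompsonF

section Combinatorics

def succAbove (i n : ℕ) : ℕ := if n < i then n else n + 1

def wordShift (l : List ℕ) (n : ℕ) : ℕ := l.foldr succAbove n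

theorem le_succAbove (i n : ℕ) : n ≤ succAbove i n := by
  unfold succAbove
  split_ifs <;> omega

theorem le_wordShift (l : List ℕ) (n : ℕ) : n ≤ wordShift l n := by
  induction l with
  | nil => exact le_rfl
  | cons a t ih => exact ih.trans (le_succAbove a _)

theorem wordShift_of_forall_lt {l : List ℕ} {n : ℕ} (h : ∀ i ∈ l, n < i) :
    wordShift l n = n := by
  induction l with
  | nil => rfl
  | cons a t ih =>
    rw [List.forall_mem_cons] at h
    change succAbove a (wordShift t n) = n
    rw [ih h.2, succAbove, if_pos h.1]

theorem lt_wordShift_concat (d : List ℕ) (a : ℕ) : a < wordShift (d ++ [a]) a :=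
  calc a < a + 1 := a.lt_succ_self
    _ ≤ wordShift d (a + 1) := le_wordShift d _
    _ = wordShift (d ++ [a]) a := by simp [wordShift, succAbove]

theorem le_of_wordShift_concat_eq {d₁ d₂ : List ℕ} {a b : ℕ}
    (h₂ : (d₂ ++ [b]).Pairwise (· ≥ ·)) (h : wordShift (d₁ ++ [a]) = wordShift (d₂ ++ [b])) :
    b ≤ a := by
  by_contra! hab
  have hfix : wordShift (d₂ ++ [b]) a = a := by
    refine wordShift_of_forall_lt fun i hi => hab.trans_le ?_
    rcases List.mem_append.1 hi with hi | hi
    · exact (List.pairwise_append.1 h₂).2.2 i hi b (List.mem_singleton_self b)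
    · exact (List.mem_singleton.1 hi).ge
  exact (lt_wordShift_concat d₁ a).ne' (congrFun h a ▸ hfix)

end Combinatorics

section CantorModel

open Stream' Equiv

abbrev Cantor : Type := Stream' Bool

def split : Cantor ≃ Cantor ⊕ Cantor :=
  (headTailEquiv Bool).trans (boolProdEquivSum Cantor)

@[simp] theorem split_cons_false (s : Cantor) : split (cons false s) = .inl s := rfl
@[simp] theorem split_cons_true (s : Cantor) : split (cons true s) = .inr s := rfl
@[simp] theorem split_symm_inl (s : Cantor) : split.symm (.inl s) = cons false s := rfl
@[simp] theorem split_symm_inr (s : Cantor) : split.symm (.inr s) = cons true s := rfl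

/-- The generator `x₀` of `F`, i.e. the associativity `(A ⊕ B) ⊕ C ≃ A ⊕ (B ⊕ C)` transported
along `Cantor ≃ Cantor ⊕ Cantor`. -/
def rotation : Perm Cantor :=
  split.trans <| (sumCongr split (Equiv.refl _)).trans <|
    (sumAssoc _ _ _).trans <| (sumCongr (Equiv.refl _) split.symm).trans split.symm

@[simp] theorem rotation_cons_true (s : Cantor) :
    rotation (cons true s) = cons true (cons true s) := rfl

@[simp] theorem rotation_cons_false_true (s : Cantor) :
    rotation (cons false (cons true s)) = cons true (cons false s) := rfl

@[simp] theorem rotation_cons_false_false (s : Cantor) :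
    rotation (cons false (cons false s)) = cons false s := rfl

def actRight : Perm Cantor →* Perm Cantor :=
  split.symm.permCongrHom.toMonoidHom.comp ((Perm.sumCongrHom _ _).comp (MonoidHom.inr _ _))

@[simp] theorem actRight_cons_false (e : Perm Cantor) (s : Cantor) :
    actRight e (cons false s) = cons false s := rfl

@[simp] theorem actRight_cons_true (e : Perm Cantor) (s : Cantor) :
    actRight e (cons true s) = cons true (e s) := rfl

theorem rotation_mul_actRight (e : Perm Cantor) :
    rotation * actRight e = actRight (actRight e) * rotation := by
  refine Equiv.ext fun s => ?_
  rw [← Stream'.eta s, ← Stream'.eta s.tail]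
  cases s.head <;> cases s.tail.head <;> simp

def alphaPerm : ℕ → Perm Cantor
  | 0 => rotation
  | n + 1 => actRight (alphaPerm n)

theorem alphaPerm_mul_alphaPerm_of_lt {i j : ℕ} (hij : i < j) :
    alphaPerm i * alphaPerm j = alphaPerm (j + 1) * alphaPerm i := by
  obtain ⟨m, rfl⟩ : ∃ m, j = m + 1 := ⟨j - 1, by omega⟩
  induction i generalizing m with
  | zero => exact rotation_mul_actRight (alphaPerm m)
  | succ k ih =>
    obtain ⟨m, rfl⟩ : ∃ m', m = m' + 1 := ⟨m - 1, by omega⟩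
    change actRight _ * actRight _ = actRight _ * actRight _
    rw [← map_mul, ← map_mul, ih m (by omega)]

def toPerm : ThompsonF →* Perm Cantor :=
  PresentedGroup.toGroup (f := alphaPerm) <| by
    rintro r ⟨i, j, hij, rfl⟩
    simp only [map_mul, map_inv, FreeGroup.lift_apply_of]
    exact mul_inv_eq_one.2 (alphaPerm_mul_alphaPerm_of_lt hij)

def ray : ℕ → Cantor
  | 0 => cons false (const true)
  | n + 1 => cons true (ray n)

theorem ray_injective : Function.Injective ray := by
  intro n m h
  induction n generalizing m with
  | zero => cases m with
    | zero => rfl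
    | succ m => exact absurd (congrArg head h) Bool.false_ne_true
  | succ n ih => cases m with
    | zero => exact absurd (congrArg head h).symm Bool.false_ne_true
    | succ m => exact congrArg (· + 1) (ih (congrArg tail h))

theorem alphaPerm_ray (i n : ℕ) : alphaPerm i (ray n) = ray (succAbove i n) := by
  induction i generalizing n with
  | zero => cases n with
    | zero => rw [alphaPerm, ray, const_eq]; rfl
    | succ n => rfl
  | succ i ih => cases n with
    | zero => rfl
    | succ n =>
      simp only [alphaPerm, ray, actRight_cons_true, ih, succAbove]
      split_ifs <;> first | rfl | omega

theorem toPerm_wordProd_ray (l : List ℕ) (n : ℕ) :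
    toPerm (wordProd l) (ray n) = ray (wordShift l n) := by
  induction l with
  | nil => rfl
  | cons a t ih =>
    simp only [wordProd, List.map_cons, List.prod_cons, map_mul, Perm.mul_apply] at ih ⊢
    rw [ih, alphaGen, toPerm, PresentedGroup.toGroup.of, alphaPerm_ray]
    rfl

theorem wordShift_eq_of_wordProd_eq {l₁ l₂ : List ℕ} (h : wordProd l₁ = wordProd l₂) :
    wordShift l₁ = wordShift l₂ :=
  funext fun n => ray_injective <| by rw [← toPerm_wordProd_ray, h, toPerm_wordProd_ray]

end CantorModel

section NormalForm

theorem alphaGen_mul_alphaGen_of_lt {i j : ℕ} (hij : i < j) :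
    alphaGen i * alphaGen j = alphaGen (j + 1) * alphaGen i := by
  have h := PresentedGroup.mk_eq_mk_of_mul_inv_mem (rels := thompsonRels) ⟨i, j, hij, rfl⟩
  rwa [map_mul, map_mul] at h

theorem wordProd_cons (a : ℕ) (t : List ℕ) : wordProd (a :: t) = alphaGen a * wordProd t := by
  simp [wordProd]

theorem wordProd_concat (d : List ℕ) (a : ℕ) : wordProd (d ++ [a]) = wordProd d * alphaGen a := by
  simp [wordProd]

def insertLetter (i : ℕ) : List ℕ → List ℕ
  | [] => [i]
  | j :: t => if j ≤ i then i :: j :: t else (j + 1) :: insertLetter i t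

theorem wordProd_insertLetter (i : ℕ) (w : List ℕ) :
    wordProd (insertLetter i w) = alphaGen i * wordProd w := by
  induction w generalizing i with
  | nil => rfl
  | cons j t ih =>
    rw [insertLetter]
    split_ifs with hji
    · rfl
    · rw [wordProd_cons, ih, wordProd_cons, ← mul_assoc, ← mul_assoc,
        alphaGen_mul_alphaGen_of_lt (show i < j by omega)]

theorem le_of_mem_insertLetter {i b : ℕ} {t : List ℕ} (hi : i ≤ b) (ht : ∀ z ∈ t, z ≤ b) :
    ∀ y ∈ insertLetter i t, y ≤ b + 1 := by
  induction t with
  | nil => simpa [insertLetter] using hi.trans b.le_succ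
  | cons j t ih =>
    simp only [List.mem_cons, forall_eq_or_imp] at ht
    rw [insertLetter]
    split_ifs <;> simp only [List.mem_cons, forall_eq_or_imp]
    · exact ⟨by omega, by omega, fun z hz => (ht.2 z hz).trans b.le_succ⟩
    · exact ⟨by omega, ih ht.2⟩

theorem pairwise_insertLetter (i : ℕ) {w : List ℕ} (hw : w.Pairwise (· ≥ ·)) :
    (insertLetter i w).Pairwise (· ≥ ·) := by
  induction w with
  | nil => exact List.pairwise_singleton _ _
  | cons j t ih =>
    obtain ⟨hj, ht⟩ := List.pairwise_cons.1 hw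
    rw [insertLetter]
    split_ifs with hji
    · exact List.pairwise_cons.2 ⟨by simpa using ⟨hji, fun z hz => (hj z hz).trans hji⟩, hw⟩
    · exact List.pairwise_cons.2 ⟨le_of_mem_insertLetter (by omega) hj, ih ht⟩

theorem exists_pairwise_wordProd_eq (l : List ℕ) :
    ∃ l' : List ℕ, l'.Pairwise (· ≥ ·) ∧ wordProd l = wordProd l' := by
  induction l with
  | nil => exact ⟨[], List.Pairwise.nil, rfl⟩
  | cons a t ih =>
    obtain ⟨w, hw, ht⟩ := ih
    exact ⟨insertLetter a w, pairwise_insertLetter a hw,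
      by rw [wordProd_cons, ht, wordProd_insertLetter]⟩

theorem eq_of_pairwise_of_wordProd_eq {l₁ l₂ : List ℕ} (h₁ : l₁.Pairwise (· ≥ ·))
    (h₂ : l₂.Pairwise (· ≥ ·)) (h : wordProd l₁ = wordProd l₂) : l₁ = l₂ := by
  induction l₁ using List.reverseRecOn generalizing l₂ with
  | nil =>
    obtain rfl | ⟨d₂, b, rfl⟩ := List.eq_nil_or_concat' l₂
    · rfl
    · have hshift := wordShift_eq_of_wordProd_eq h
      exact absurd (congrFun hshift b) (lt_wordShift_concat d₂ b).ne
  | append_singleton d₁ a ih =>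
    have hshift := wordShift_eq_of_wordProd_eq h
    obtain rfl | ⟨d₂, b, rfl⟩ := List.eq_nil_or_concat' l₂
    · exact absurd (congrFun hshift a) (lt_wordShift_concat d₁ a).ne'
    obtain rfl : a = b :=
      le_antisymm (le_of_wordShift_concat_eq h₁ hshift.symm) (le_of_wordShift_concat_eq h₂ hshift)
    rw [wordProd_concat, wordProd_concat] at h
    rw [ih (h₁.sublist (List.sublist_append_left _ _)) (h₂.sublist (List.sublist_append_left _ _))
      (mul_right_cancel h)]

end NormalForm

end ThompsonF

/-- Every positive word in the `αᵢ` equals, in `G`, a unique positive word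
with non-increasing indices. -/
theorem positive_word_normal_form (l : List ℕ) :
    ∃! l' : List ℕ, l'.Pairwise (· ≥ ·) ∧ wordProd l = wordProd l' := by
  obtain ⟨w, hw, hlw⟩ := ThompsonF.exists_pairwise_wordProd_eq l
  refine ⟨w, ⟨hw, hlw⟩, fun w' ⟨hw', hlw'⟩ => ?_⟩
  exact ThompsonF.eq_of_pairwise_of_wordProd_eq hw' hw (hlw'.symm.trans hlw)
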